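/- arXiv:2107.09161 — 3 statements merged into one kernel-verified Lean document; each statement's English description precedes it below -/
import Mathlib

section
/- Let A and B be real symmetric n×n matrices and let 1 ≤ k ≤ n. Then the sum of the k largest eigenvalues of A + B is at most the sum of the k largest eigenvalues of A plus the sum of the k largest eigenvalues of B. -/
set_option maxHeartbeats 1200000

open Finset Matrix

section KyFanAux
variable {n k : ℕ}


lemma card_filter_lt_fin {n k : ℕ} (hkn : k ≤ n) :
    (Finset.univ.filter (fun i : Fin n => (i : ℕ) < k)).card = k := by
  have : Finset.univ.filter (fun i : Fin n => (i : ℕ) < k)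
      = Finset.univ.map (Fin.castLEEmb hkn) := by
    ext i
    simp only [mem_filter, mem_univ, true_and, mem_map, Fin.castLEEmb]
    constructor
    · intro h; exact ⟨⟨i, h⟩, rfl⟩
    · rintro ⟨j, rfl⟩; exact j.2
  rw [this, card_map, card_univ, Fintype.card_fin]

lemma maj_lemma {n k : ℕ} (hk1 : 1 ≤ k) (hkn : k ≤ n)
    (μ s : Fin n → ℝ) (hμ : Antitone μ)
    (hs0 : ∀ i, 0 ≤ s i) (hs1 : ∀ i, s i ≤ 1) (hsum : ∑ i, s i = k) :
    ∑ i, μ i * s i ≤ ∑ i ∈ Finset.univ.filter (fun i : Fin n => (i : ℕ) < k), μ i := by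
  set c : ℝ := μ ⟨k - 1, by omega⟩ with hc
  have key : ∑ i, (μ i - c) * s i ≤
      ∑ i ∈ Finset.univ.filter (fun i : Fin n => (i : ℕ) < k), (μ i - c) := by
    rw [← Finset.sum_filter_add_sum_filter_not Finset.univ (fun i : Fin n => (i : ℕ) < k)]
    have h1 : ∑ i ∈ Finset.univ.filter (fun i : Fin n => (i : ℕ) < k), (μ i - c) * s i ≤
        ∑ i ∈ Finset.univ.filter (fun i : Fin n => (i : ℕ) < k), (μ i - c) := by
      apply Finset.sum_le_sum
      intro i hi
      simp only [mem_filter] at hi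
      have hci : c ≤ μ i := hμ (by simp [Fin.le_def]; omega)
      nlinarith [hs0 i, hs1 i]
    have h2 : ∑ i ∈ Finset.univ.filter (fun i : Fin n => ¬ (i : ℕ) < k), (μ i - c) * s i ≤ 0 := by
      apply Finset.sum_nonpos
      intro i hi
      simp only [mem_filter] at hi
      have hci : μ i ≤ c := hμ (by simp [Fin.le_def]; omega)
      nlinarith [hs0 i]
    linarith
  have expand : ∑ i, μ i * s i = ∑ i, (μ i - c) * s i + c * k := by
    have h : ∀ i : Fin n, μ i * s i = (μ i - c) * s i + c * s i := fun i => by ring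
    simp_rw [h]
    rw [Finset.sum_add_distrib, ← Finset.mul_sum, hsum]
  have expand2 : ∑ i ∈ Finset.univ.filter (fun i : Fin n => (i : ℕ) < k), (μ i - c)
      = ∑ i ∈ Finset.univ.filter (fun i : Fin n => (i : ℕ) < k), μ i - c * k := by
    rw [Finset.sum_sub_distrib, Finset.sum_const, card_filter_lt_fin hkn]
    ring
  linarith [key]


/-- Upper bound: trace of P*M for a trace-k orthogonal projection P. -/
lemma fan_upper (M : Matrix (Fin n) (Fin n) ℝ) (hM : M.IsHermitian)
    (μ : Fin n → ℝ) (hμ : Antitone μ) (σ : Equiv.Perm (Fin n))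
    (hμe : μ = hM.eigenvalues ∘ σ) (hk1 : 1 ≤ k) (hkn : k ≤ n)
    (P : Matrix (Fin n) (Fin n) ℝ) (hP : P.IsHermitian) (hP2 : P * P = P)
    (htr : P.trace = (k : ℝ)) :
    (P * M).trace ≤ ∑ i ∈ Finset.univ.filter (fun i : Fin n => (i : ℕ) < k), μ i := by
  classical
  set U : Matrix (Fin n) (Fin n) ℝ := (hM.eigenvectorUnitary : Matrix (Fin n) (Fin n) ℝ) with hU
  have hUU : star U * U = 1 := Matrix.mem_unitaryGroup_iff'.mp hM.eigenvectorUnitary.2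
  have hUU' : U * star U = 1 := Matrix.mem_unitaryGroup_iff.mp hM.eigenvectorUnitary.2
  set Q : Matrix (Fin n) (Fin n) ℝ := star U * P * U with hQ
  have hQherm : Q.IsHermitian := by
    unfold Q
    rw [Matrix.IsHermitian, conjTranspose_mul, conjTranspose_mul, hP.eq,
      star_eq_conjTranspose, conjTranspose_conjTranspose, Matrix.mul_assoc]
  have hQ2 : Q * Q = Q := by
    unfold Q
    calc star U * P * U * (star U * P * U)
        = star U * (P * (U * star U) * P) * U := by noncomm_ring
      _ = star U * P * U := by rw [hUU', Matrix.mul_one, hP2]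
  have hQtr : Q.trace = (k : ℝ) := by
    unfold Q
    rw [trace_mul_cycle, hUU', Matrix.one_mul, htr]
  -- diagonal entries of Q in [0,1]
  have hQdiag : ∀ i, 0 ≤ Q i i ∧ Q i i ≤ 1 := by
    intro i
    have hsq : Q i i = ∑ j, (Q i j) ^ 2 := by
      conv_lhs => rw [← hQ2]
      rw [Matrix.mul_apply]
      congr 1; ext j
      have : Q j i = Q i j := by
        have := congrFun (congrFun hQherm.eq i) j
        simpa [Matrix.conjTranspose_apply] using this
      rw [this]; ring
    constructor
    · rw [hsq]; exact Finset.sum_nonneg fun j _ => sq_nonneg _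
    · nlinarith [hsq, Finset.single_le_sum (f := fun j => (Q i j) ^ 2)
        (fun j _ => sq_nonneg _) (Finset.mem_univ i)]
  -- trace(P*M) = ∑ λ j * Q j j
  have hPM : (P * M).trace = ∑ j, hM.eigenvalues j * Q j j := by
    have key : (P * M).trace = (Q * diagonal (RCLike.ofReal ∘ hM.eigenvalues)).trace := by
      conv_lhs => rw [hM.spectral_theorem, Unitary.conjStarAlgAut_apply]
      have h1 : P * (U * diagonal (RCLike.ofReal ∘ hM.eigenvalues) * star U)
          = P * U * diagonal (RCLike.ofReal ∘ hM.eigenvalues) * star U := by noncomm_ring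
      rw [h1, trace_mul_cycle, hQ]
      congr 1
      noncomm_ring
    rw [key, Matrix.trace]
    simp only [Matrix.diag_apply, Matrix.mul_diagonal, Function.comp_apply,
      RCLike.ofReal_real_eq_id, id_eq]
    exact Finset.sum_congr rfl fun j _ => mul_comm _ _
  rw [hPM]
  -- reindex by σ
  have hre : ∑ j, hM.eigenvalues j * Q j j = ∑ i, μ i * Q (σ i) (σ i) := by
    rw [← Equiv.sum_comp σ (fun j => hM.eigenvalues j * Q j j)]
    simp [hμe]
  rw [hre]
  exact maj_lemma hk1 hkn μ (fun i => Q (σ i) (σ i)) hμ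
    (fun i => (hQdiag (σ i)).1) (fun i => (hQdiag (σ i)).2)
    (by rw [Equiv.sum_comp σ (fun j => Q j j)]; exact hQtr)



lemma fan_attain (M : Matrix (Fin n) (Fin n) ℝ) (hM : M.IsHermitian)
    (ξ : Fin n → ℝ) (σ : Equiv.Perm (Fin n)) (hξe : ξ = hM.eigenvalues ∘ σ)
    (hkn : k ≤ n) :
    ∃ P : Matrix (Fin n) (Fin n) ℝ, P.IsHermitian ∧ P * P = P ∧ P.trace = (k : ℝ) ∧
      (P * M).trace = ∑ i ∈ Finset.univ.filter (fun i : Fin n => (i : ℕ) < k), ξ i := by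
  classical
  set U : Matrix (Fin n) (Fin n) ℝ := (hM.eigenvectorUnitary : Matrix (Fin n) (Fin n) ℝ) with hU
  have hUU : star U * U = 1 := Matrix.mem_unitaryGroup_iff'.mp hM.eigenvectorUnitary.2
  have hUU' : U * star U = 1 := Matrix.mem_unitaryGroup_iff.mp hM.eigenvectorUnitary.2
  set e : Fin n → ℝ := fun j => if (σ.symm j : ℕ) < k then 1 else 0 with he
  have hee : ∀ j, e j * e j = e j := by
    intro j; by_cases h : (σ.symm j : ℕ) < k <;> simp [he, h]
  refine ⟨U * diagonal e * star U, ?_, ?_, ?_, ?_⟩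
  · have := isHermitian_mul_mul_conjTranspose U (isHermitian_diagonal e)
    simpa [star_eq_conjTranspose] using this
  · calc U * diagonal e * star U * (U * diagonal e * star U)
        = U * (diagonal e * (star U * U) * diagonal e) * star U := by noncomm_ring
      _ = U * diagonal e * star U := by
          rw [hUU, Matrix.mul_one, diagonal_mul_diagonal,
            show (fun i => e i * e i) = e from funext hee]
  · rw [trace_mul_cycle, hUU, Matrix.one_mul, trace_diagonal]
    rw [← Equiv.sum_comp σ e]
    have h2 : ∀ i : Fin n, e (σ i) = if (i : ℕ) < k then 1 else 0 := by
      intro i; simp [he]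
    simp_rw [h2]
    rw [Finset.sum_boole, card_filter_lt_fin hkn]
  · have h1 : U * diagonal e * star U * M
        = U * diagonal (fun j => e j * hM.eigenvalues j) * star U := by
      conv_lhs => rw [hM.spectral_theorem, Unitary.conjStarAlgAut_apply]
      calc U * diagonal e * star U *
            (U * diagonal (RCLike.ofReal ∘ hM.eigenvalues) * star U)
          = U * (diagonal e * (star U * U) * diagonal (RCLike.ofReal ∘ hM.eigenvalues))
              * star U := by noncomm_ring
        _ = _ := by
            rw [hUU, Matrix.mul_one, diagonal_mul_diagonal]
            rfl
    rw [h1, trace_mul_cycle, hUU, Matrix.one_mul, trace_diagonal]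
    rw [← Equiv.sum_comp σ (fun j => e j * hM.eigenvalues j), Finset.sum_filter]
    apply Finset.sum_congr rfl
    intro i _
    by_cases h : (i : ℕ) < k <;> simp [he, h, hξe]

end KyFanAux

/-- **Ky Fan / Fulton's lemma**: the sum of the `k` largest eigenvalues of a sum of two
real symmetric matrices is at most the sum of the `k` largest eigenvalues of each summand.
Here `μ`, `ν`, `ξ` are the eigenvalue sequences of `A`, `B`, `A + B` arranged in
non-increasing order. -/
theorem stmt_4 {n : ℕ} (A B : Matrix (Fin n) (Fin n) ℝ)
    (hA : A.IsHermitian) (hB : B.IsHermitian) (hAB : (A + B).IsHermitian)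
    (μ ν ξ : Fin n → ℝ) (hμ : Antitone μ) (hν : Antitone ν) (hξ : Antitone ξ)
    (eμ : ∃ e : Equiv.Perm (Fin n), μ = hA.eigenvalues ∘ e)
    (eν : ∃ e : Equiv.Perm (Fin n), ν = hB.eigenvalues ∘ e)
    (eξ : ∃ e : Equiv.Perm (Fin n), ξ = hAB.eigenvalues ∘ e)
    (k : ℕ) (hk1 : 1 ≤ k) (hkn : k ≤ n) :
    ∑ i ∈ Finset.univ.filter (fun i : Fin n => (i : ℕ) < k), ξ i ≤
      ∑ i ∈ Finset.univ.filter (fun i : Fin n => (i : ℕ) < k), μ i +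
        ∑ i ∈ Finset.univ.filter (fun i : Fin n => (i : ℕ) < k), ν i := by
  obtain ⟨σμ, hμe⟩ := eμ
  obtain ⟨σν, hνe⟩ := eν
  obtain ⟨σξ, hξe⟩ := eξ
  obtain ⟨P, hPh, hP2, hPtr, hPval⟩ := fan_attain (A + B) hAB ξ σξ hξe hkn
  have hsplit : (P * (A + B)).trace = (P * A).trace + (P * B).trace := by
    rw [Matrix.mul_add, Matrix.trace_add]
  have h1 := fan_upper A hA μ hμ σμ hμe hk1 hkn P hPh hP2 hPtr
  have h2 := fan_upper B hB ν hν σν hνe hk1 hkn P hPh hP2 hPtr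
  rw [← hPval, hsplit]
  exact add_le_add h1 h2
end

section
/- The friendship graph F_n (the join of K_1 with n disjoint copies of K_2, having 2n+1 vertices) has normalized Laplacian spectrum consisting of the eigenvalue 0 with multiplicity 1, the eigenvalue 1/2 with multiplicity n - 1, and the eigenvalue 3/2 with multiplicity n + 1. -/
open scoped Classical in
/-- The normalized Laplacian matrix of a graph. -/
noncomputable def normLap {V : Type*} [Fintype V] (G : SimpleGraph V) : Matrix V V ℝ :=
  Matrix.of fun i j =>
    if i = j then (if G.degree i = 0 then 0 else 1)
    else if G.Adj i j then -(1 / Real.sqrt ((G.degree i : ℝ) * (G.degree j : ℝ))) else 0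

/-- The friendship graph `F_n`: the join of `K_1` (the left `Unit` vertex) with `n`
disjoint copies of `K_2` (vertices `(i, x)` with `x : Fin 2`, two vertices of the same
copy `i` being adjacent). It has `2n + 1` vertices. -/
def friendshipGraph (n : ℕ) : SimpleGraph (Unit ⊕ Fin n × Fin 2) :=
  SimpleGraph.fromRel fun a b =>
    a.isLeft = true ∨ b.isLeft = true ∨
      ∃ i : Fin n, (∃ x, a = Sum.inr (i, x)) ∧ ∃ y, b = Sum.inr (i, y)

open Matrix Polynomial

section Aux

lemma fg_adj_inl_inr (n : ℕ) (p : Fin n × Fin 2) :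
    (friendshipGraph n).Adj (Sum.inl ()) (Sum.inr p) := by
  simp [friendshipGraph, SimpleGraph.fromRel_adj]

lemma fg_adj_inr_inr (n : ℕ) (i j : Fin n) (x y : Fin 2) :
    (friendshipGraph n).Adj (Sum.inr (i,x)) (Sum.inr (j,y)) ↔ i = j ∧ x ≠ y := by
  simp only [friendshipGraph, SimpleGraph.fromRel_adj]
  constructor
  · rintro ⟨hne, h | h⟩ <;>
      rcases h with h | h | ⟨k, ⟨a, ha⟩, ⟨b, hb⟩⟩ <;>
        first
        | simp_all
        | (cases ha; cases hb; simp_all)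
  · rintro ⟨rfl, hxy⟩
    exact ⟨by simp [hxy], Or.inl (Or.inr (Or.inr ⟨i, ⟨x, rfl⟩, ⟨y, rfl⟩⟩))⟩

open scoped Classical

lemma fg_deg_center (n : ℕ) : (friendshipGraph n).degree (Sum.inl ()) = 2 * n := by
  have : (friendshipGraph n).neighborFinset (Sum.inl ()) = Finset.univ.image Sum.inr := by
    ext w
    cases w with
    | inl u => cases u; simp [SimpleGraph.mem_neighborFinset]
    | inr p => simp [SimpleGraph.mem_neighborFinset, fg_adj_inl_inr]
  rw [SimpleGraph.degree, this, Finset.card_image_of_injective _ Sum.inr_injective]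
  simp [Fintype.card_prod]; ring

lemma fg_deg_leaf (n : ℕ) (i : Fin n) (x : Fin 2) :
    (friendshipGraph n).degree (Sum.inr (i, x)) = 2 := by
  have hx : x + 1 ≠ x := by fin_cases x <;> decide
  have : (friendshipGraph n).neighborFinset (Sum.inr (i, x)) =
      {Sum.inl (), Sum.inr (i, x + 1)} := by
    ext w
    cases w with
    | inl u =>
      cases u
      simp [SimpleGraph.mem_neighborFinset,
        ((friendshipGraph n).adj_symm (fg_adj_inl_inr n (i,x)))]
    | inr p =>
      obtain ⟨j, y⟩ := p
      simp only [SimpleGraph.mem_neighborFinset, fg_adj_inr_inr, Finset.mem_insert,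
        Finset.mem_singleton, Sum.inr.injEq, Prod.mk.injEq]
      constructor
      · rintro ⟨rfl, hxy⟩
        right; exact ⟨rfl, by fin_cases x <;> fin_cases y <;> simp_all⟩
      · rintro (h | ⟨rfl, rfl⟩)
        · exact absurd h (by simp)
        · exact ⟨rfl, fun h => hx h.symm⟩
  rw [SimpleGraph.degree, this]
  rw [Finset.card_insert_of_notMem (by simp), Finset.card_singleton]

variable (n : ℕ)

lemma nl_center_center (hn : 1 ≤ n) :
    normLap (friendshipGraph n) (Sum.inl ()) (Sum.inl ()) = 1 := by
  have h : (friendshipGraph n).degree (Sum.inl ()) ≠ 0 := by rw [fg_deg_center]; omega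
  simp [normLap, h]

lemma nl_leaf_leaf_diag (i : Fin n) (x : Fin 2) :
    normLap (friendshipGraph n) (Sum.inr (i,x)) (Sum.inr (i,x)) = 1 := by
  simp [normLap, fg_deg_leaf]

lemma nl_center_leaf (p : Fin n × Fin 2) :
    normLap (friendshipGraph n) (Sum.inl ()) (Sum.inr p) = -(1 / (2 * Real.sqrt n)) := by
  have h4 : Real.sqrt ((2*n : ℕ) * ((2:ℕ) : ℝ)) = 2 * Real.sqrt n := by
    push_cast
    rw [show (2:ℝ) * n * 2 = 4 * n by ring, Real.sqrt_mul (by norm_num),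
      show (4:ℝ) = 2^2 by norm_num, Real.sqrt_sq (by norm_num)]
  obtain ⟨i, x⟩ := p
  simp only [normLap, Matrix.of_apply,
    if_neg (by simp : (Sum.inl () : Unit ⊕ Fin n × Fin 2) ≠ Sum.inr (i,x)),
    if_pos (fg_adj_inl_inr n (i,x)), fg_deg_center, fg_deg_leaf]
  rw [h4]

lemma nl_leaf_center (p : Fin n × Fin 2) :
    normLap (friendshipGraph n) (Sum.inr p) (Sum.inl ()) = -(1 / (2 * Real.sqrt n)) := by
  have h4 : Real.sqrt (((2:ℕ) : ℝ) * (2*n : ℕ)) = 2 * Real.sqrt n := by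
    push_cast
    rw [show (2:ℝ) * (2 * n) = 4 * n by ring, Real.sqrt_mul (by norm_num),
      show (4:ℝ) = 2^2 by norm_num, Real.sqrt_sq (by norm_num)]
  obtain ⟨i, x⟩ := p
  simp only [normLap, Matrix.of_apply,
    if_neg (by simp : (Sum.inr (i,x) : Unit ⊕ Fin n × Fin 2) ≠ Sum.inl ()),
    if_pos ((friendshipGraph n).adj_symm (fg_adj_inl_inr n (i,x))), fg_deg_center, fg_deg_leaf]
  rw [h4]

lemma nl_leaf_leaf (i j : Fin n) (x y : Fin 2) (h : ¬(i = j ∧ x = y)) :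
    normLap (friendshipGraph n) (Sum.inr (i,x)) (Sum.inr (j,y)) =
      if i = j then -(1/2) else 0 := by
  have hne : (Sum.inr (i,x) : Unit ⊕ Fin n × Fin 2) ≠ Sum.inr (j,y) := by
    simp only [ne_eq, Sum.inr.injEq, Prod.mk.injEq]; tauto
  by_cases hij : i = j
  · subst hij
    have hxy : x ≠ y := fun hh => h ⟨rfl, hh⟩
    simp only [normLap, Matrix.of_apply, if_neg hne,
      if_pos ((fg_adj_inr_inr n i i x y).mpr ⟨rfl, hxy⟩), fg_deg_leaf, if_pos rfl]
    norm_num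
  · simp only [normLap, Matrix.of_apply, if_neg hne,
      if_neg (fun hadj => hij ((fg_adj_inr_inr n i j x y).mp hadj).1), if_neg hij]

end Aux


noncomputable instance : CharZero (RatFunc ℝ) :=
  charZero_of_injective_algebraMap (IsFractionRing.injective (Polynomial ℝ) (RatFunc ℝ))

noncomputable def phiK : Polynomial ℝ →+* RatFunc ℝ := algebraMap (Polynomial ℝ) (RatFunc ℝ)
noncomputable def csth : ℝ →+* RatFunc ℝ := phiK.comp Polynomial.C

lemma phiK_inj : Function.Injective phiK := IsFractionRing.injective (Polynomial ℝ) (RatFunc ℝ)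

lemma csth_half : csth (1/2) = (1/2 : RatFunc ℝ) := by
  rw [map_div₀, _root_.map_one, map_ofNat]

lemma csth_threehalf : csth (3/2) = (3/2 : RatFunc ℝ) := by
  rw [map_div₀, map_ofNat, map_ofNat]

lemma phiK_X_sub_ne (r : ℝ) : phiK X - csth r ≠ 0 := by
  rw [show phiK X - csth r = phiK (X - C r) by rw [map_sub]; rfl]
  intro h
  exact Polynomial.X_sub_C_ne_zero r (phiK_inj (h.trans (map_zero phiK).symm))

local notation "u" => phiK X

noncomputable def Dl : RatFunc ℝ := (u - 1/2) * (u - 3/2)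

lemma Dl_ne : Dl ≠ 0 := by
  apply mul_ne_zero
  · rw [show (1/2 : RatFunc ℝ) = csth (1/2) from csth_half.symm]; exact phiK_X_sub_ne _
  · rw [show (3/2 : RatFunc ℝ) = csth (3/2) from csth_threehalf.symm]; exact phiK_X_sub_ne _

lemma Dl_eq : Dl = (u - 1)^2 - 1/4 := by rw [Dl]; ring

lemma sA : (u-1) * ((u-1)/Dl) + (1/2) * (-(1/2)/Dl) = 1 := by
  rw [show (u-1) * ((u-1)/Dl) + (1/2) * (-(1/2)/Dl) = ((u-1)^2 - 1/4)/Dl by ring,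
    ← Dl_eq, div_self Dl_ne]

lemma sB : (u-1) * (-(1/2)/Dl) + (1/2) * ((u-1)/Dl) = 0 := by ring

lemma sA' : ((u-1)/Dl) * (u-1) + (-(1/2)/Dl) * (1/2) = 1 := by
  rw [mul_comm ((u-1)/Dl), mul_comm (-(1/2)/Dl)]; exact sA

lemma sB' : ((u-1)/Dl) * (1/2) + (-(1/2)/Dl) * (u-1) = 0 := by ring

section M
variable (n : ℕ)

noncomputable def Dmat : Matrix (Fin n × Fin 2) (Fin n × Fin 2) (RatFunc ℝ) :=
  Matrix.of fun p q => if p.1 = q.1 then (if p.2 = q.2 then u - 1 else (1/2 : RatFunc ℝ)) else 0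

noncomputable def Emat : Matrix (Fin n × Fin 2) (Fin n × Fin 2) (RatFunc ℝ) :=
  Matrix.of fun p q =>
    if p.1 = q.1 then (if p.2 = q.2 then (u - 1)/Dl else -(1/2)/Dl) else 0

lemma DE_eq_one : Dmat n * Emat n = 1 := by
  ext ⟨i, x⟩ ⟨j, y⟩
  rw [Matrix.mul_apply, Fintype.sum_prod_type]
  rw [Finset.sum_eq_single i ?h0 (by simp)]
  · rw [Fin.sum_univ_two]
    by_cases hij : i = j
    · subst hij
      fin_cases x <;> fin_cases y <;>
        simp only [Dmat, Emat, Matrix.of_apply, Matrix.one_apply, if_pos rfl, Prod.mk.injEq,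
          true_and, and_self, if_true, and_false, if_false,
          (by decide : ((0:Fin 2) = 1) = False), (by decide : ((1:Fin 2) = 0) = False),
          (by decide : ((0:Fin 2) = 0) = True), (by decide : ((1:Fin 2) = 1) = True)]
      · exact sA
      · exact sB
      · rw [add_comm]; exact sB
      · rw [add_comm]; exact sA
    · simp [Dmat, Emat, Matrix.one_apply, Prod.ext_iff, hij]
  · intro k _ hk
    rw [Fin.sum_univ_two]
    simp [Dmat, Ne.symm hk]

lemma ED_eq_one : Emat n * Dmat n = 1 := by
  ext ⟨i, x⟩ ⟨j, y⟩
  rw [Matrix.mul_apply, Fintype.sum_prod_type]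
  rw [Finset.sum_eq_single i ?h0 (by simp)]
  · rw [Fin.sum_univ_two]
    by_cases hij : i = j
    · subst hij
      fin_cases x <;> fin_cases y <;>
        simp only [Dmat, Emat, Matrix.of_apply, Matrix.one_apply, if_pos rfl, Prod.mk.injEq,
          true_and, and_self, if_true, and_false, if_false,
          (by decide : ((0:Fin 2) = 1) = False), (by decide : ((1:Fin 2) = 0) = False),
          (by decide : ((0:Fin 2) = 0) = True), (by decide : ((1:Fin 2) = 1) = True)]
      · exact sA'
      · exact sB'
      · rw [add_comm]; exact sB'
      · rw [add_comm]; exact sA'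
    · simp [Dmat, Emat, Matrix.one_apply, Prod.ext_iff, hij]
  · intro k _ hk
    rw [Fin.sum_univ_two]
    simp [Emat, Ne.symm hk]

noncomputable instance : Invertible (Dmat n) := ⟨Emat n, ED_eq_one n, DE_eq_one n⟩

lemma det_Dmat : (Dmat n).det = Dl ^ n := by
  have hD : Dmat n = (Matrix.blockDiagonal (fun _ : Fin n =>
      !![u - 1, 1/2; 1/2, u - 1])).submatrix (Equiv.prodComm (Fin n) (Fin 2))
        (Equiv.prodComm (Fin n) (Fin 2)) := by
    ext ⟨i, x⟩ ⟨j, y⟩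
    by_cases hij : i = j
    · subst hij
      fin_cases x <;> fin_cases y <;>
        simp [Dmat, Matrix.blockDiagonal_apply, Matrix.submatrix]
    · simp [Dmat, Matrix.blockDiagonal_apply, Matrix.submatrix, hij, Ne.symm hij]
  rw [hD, Matrix.det_submatrix_equiv_self, Matrix.det_blockDiagonal]
  simp only [Matrix.det_fin_two_of, Finset.prod_const, Finset.card_univ, Fintype.card_fin]
  congr 1
  rw [Dl]; ring
end M

section Main
variable (n : ℕ)

noncomputable def cK (n : ℕ) : RatFunc ℝ := csth (1/(2*Real.sqrt n))

noncomputable def Amat : Matrix Unit Unit (RatFunc ℝ) := Matrix.of fun _ _ => u - 1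
noncomputable def Bmat (n : ℕ) : Matrix Unit (Fin n × Fin 2) (RatFunc ℝ) :=
  Matrix.of fun _ _ => cK n
noncomputable def Cmat (n : ℕ) : Matrix (Fin n × Fin 2) Unit (RatFunc ℝ) :=
  Matrix.of fun _ _ => cK n

lemma hblocks (hn : 1 ≤ n) :
    ((normLap (friendshipGraph n)).charmatrix).map phiK =
      Matrix.fromBlocks Amat (Bmat n) (Cmat n) (Dmat n) := by
  ext a b
  rcases a with a | ⟨i, x⟩ <;> rcases b with b | ⟨j, y⟩
  · cases a; cases b
    rw [Matrix.map_apply, charmatrix_apply, Matrix.diagonal_apply_eq,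
      nl_center_center n hn, map_sub]
    show u - phiK (C 1) = Matrix.fromBlocks Amat (Bmat n) (Cmat n) (Dmat n) _ _
    rw [Polynomial.C_1, _root_.map_one]
    rfl
  · cases a
    rw [Matrix.map_apply, charmatrix_apply, Matrix.diagonal_apply_ne _ (by simp),
      nl_center_leaf, map_sub, map_zero, zero_sub, map_neg, map_neg, neg_neg]
    show csth (1 / (2 * Real.sqrt n)) = _
    rfl
  · cases b
    rw [Matrix.map_apply, charmatrix_apply, Matrix.diagonal_apply_ne _ (by simp),
      nl_leaf_center, map_sub, map_zero, zero_sub, map_neg, map_neg, neg_neg]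
    show csth (1 / (2 * Real.sqrt n)) = _
    rfl
  · rw [Matrix.map_apply, charmatrix_apply]
    show _ = Dmat n (i, x) (j, y)
    by_cases hd : i = j ∧ x = y
    · obtain ⟨rfl, rfl⟩ := hd
      rw [Matrix.diagonal_apply_eq, nl_leaf_leaf_diag, map_sub]
      show u - phiK (C 1) = _
      rw [Polynomial.C_1, _root_.map_one, Dmat]
      simp
    · rw [Matrix.diagonal_apply_ne _ (by simp [Prod.ext_iff]; tauto),
        nl_leaf_leaf n i j x y hd, zero_sub]
      by_cases hij : i = j
      · subst hij
        have hxy : x ≠ y := fun hh => hd ⟨rfl, hh⟩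
        rw [if_pos rfl, Polynomial.C_neg]
        simp only [_root_.map_neg, neg_neg]
        rw [show phiK (C (1/2)) = csth (1/2) from rfl, csth_half, Dmat]
        simp [hxy]
      · rw [if_neg hij, Polynomial.C_0]
        simp [Dmat, hij]

lemma hBE (q : Fin n × Fin 2) :
    (Bmat n * Emat n) () q = cK n * ((u-1)/Dl + -(1/2)/Dl) := by
  rw [Matrix.mul_apply, Fintype.sum_prod_type]
  rw [Finset.sum_eq_single q.1 ?h0 (by simp)]
  · rw [Fin.sum_univ_two]
    obtain ⟨j, y⟩ := q
    fin_cases y <;> simp [Bmat, Emat, Fin.mk_zero, Fin.mk_one] <;> ring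
  · intro k _ hk
    rw [Fin.sum_univ_two]
    simp [Emat, hk]

lemma hSchur (hn : 1 ≤ n) :
    (Bmat n * Emat n * Cmat n) () () = 1/2 * ((u-1)/Dl + -(1/2)/Dl) := by
  have hn0 : ((n : ℕ) : RatFunc ℝ) ≠ 0 := Nat.cast_ne_zero.mpr (by omega)
  rw [Matrix.mul_apply]
  have : ∀ q : Fin n × Fin 2, (Bmat n * Emat n) () q * Cmat n q () =
      cK n * ((u-1)/Dl + -(1/2)/Dl) * cK n := fun q => by rw [hBE]; rfl
  rw [Finset.sum_congr rfl fun q _ => this q, Finset.sum_const, Finset.card_univ,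
    Fintype.card_prod, Fintype.card_fin, Fintype.card_fin, nsmul_eq_mul]
  have hc2 : cK n * cK n = 1/(4 * ((n : ℕ) : RatFunc ℝ)) := by
    rw [cK, ← _root_.map_mul]
    have : (1/(2*Real.sqrt n)) * (1/(2*Real.sqrt n)) = 1/(4 * (n:ℝ)) := by
      rw [div_mul_div_comm, one_mul]
      congr 1
      rw [show (2:ℝ) * Real.sqrt n * (2 * Real.sqrt n) = 4 * (Real.sqrt n * Real.sqrt n) by ring,
        Real.mul_self_sqrt (Nat.cast_nonneg n)]
    rw [this, map_div₀, _root_.map_one, _root_.map_mul, map_ofNat, map_natCast]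
  have h12 : ((n * 2 : ℕ) : RatFunc ℝ) * (1/(4 * ((n : ℕ) : RatFunc ℝ))) = 1/2 := by
    push_cast
    field_simp
    ring
  calc ((n * 2 : ℕ) : RatFunc ℝ) * (cK n * ((u-1)/Dl + -(1/2)/Dl) * cK n)
      = ((n * 2 : ℕ) : RatFunc ℝ) * (cK n * cK n) * ((u-1)/Dl + -(1/2)/Dl) := by ring
    _ = 1/2 * ((u-1)/Dl + -(1/2)/Dl) := by rw [hc2, h12]

end Main

/-- The normalized Laplacian spectrum of the friendship graph `F_n` (`n ≥ 1`) consists of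
the eigenvalue `0` with multiplicity `1`, `1/2` with multiplicity `n - 1`, and `3/2`
with multiplicity `n + 1`, expressed via the characteristic polynomial. -/
theorem stmt_12 (n : ℕ) (hn : 1 ≤ n) :
    (normLap (friendshipGraph n)).charpoly =
      Polynomial.X * (Polynomial.X - Polynomial.C ((1 : ℝ) / 2)) ^ (n - 1) *
        (Polynomial.X - Polynomial.C ((3 : ℝ) / 2)) ^ (n + 1) := by
  apply phiK_inj
  have hL : phiK ((normLap (friendshipGraph n)).charpoly) =
      Dl^n * ((u - 1) - 1/2 * ((u-1)/Dl + -(1/2)/Dl)) := by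
    have hcp : (normLap (friendshipGraph n)).charpoly =
        ((normLap (friendshipGraph n)).charmatrix).det := rfl
    rw [hcp, RingHom.map_det, RingHom.mapMatrix_apply, hblocks n hn,
      Matrix.det_fromBlocks₂₂, det_Dmat]
    congr 1
    have hinv : (⅟(Dmat n) : Matrix _ _ _) = Emat n := rfl
    rw [hinv, Matrix.det_unique, Matrix.sub_apply]
    show Amat () () - (Bmat n * Emat n * Cmat n) () () = _
    rw [hSchur n hn]
    rfl
  have hR : phiK (Polynomial.X * (Polynomial.X - Polynomial.C ((1 : ℝ) / 2)) ^ (n - 1) *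
        (Polynomial.X - Polynomial.C ((3 : ℝ) / 2)) ^ (n + 1)) =
      u * (u - 1/2)^(n-1) * (u - 3/2)^(n+1) := by
    rw [_root_.map_mul, _root_.map_mul, map_pow, map_pow, map_sub, map_sub,
      show phiK (C ((1:ℝ)/2)) = csth (1/2) from rfl,
      show phiK (C ((3:ℝ)/2)) = csth (3/2) from rfl, csth_half, csth_threehalf]
  rw [hL, hR]
  obtain ⟨m, rfl⟩ : ∃ m, n = m + 1 := ⟨n - 1, by omega⟩
  have hkey : Dl * ((u-1) - 1/2 * ((u-1)/Dl + -(1/2)/Dl)) = u * (u - 3/2)^2 := by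
    have h1 : Dl * ((u-1)/Dl) = u - 1 := mul_div_cancel₀ _ Dl_ne
    have h2 : Dl * (-(1/2)/Dl) = -(1/2) := mul_div_cancel₀ _ Dl_ne
    calc Dl * ((u-1) - 1/2 * ((u-1)/Dl + -(1/2)/Dl))
        = Dl * (u-1) - 1/2 * (Dl * ((u-1)/Dl) + Dl * (-(1/2)/Dl)) := by ring
      _ = Dl * (u-1) - 1/2 * ((u-1) + -(1/2)) := by rw [h1, h2]
      _ = u * (u - 3/2)^2 := by rw [Dl]; ring
  rw [pow_succ, mul_assoc, mul_comm (Dl^m), hkey, Nat.add_sub_cancel, Dl, mul_pow]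
  ring
end

section
/- The distance signless Laplacian spectrum of the complete bipartite graph K_{a,b} (a, b ≥ 1, a + b ≥ 3) consists of the eigenvalue 2a + b - 4 with multiplicity a - 1, the eigenvalue 2b + a - 4 with multiplicity b - 1, and the two eigenvalues (5(a+b) - 8 ± √(9(a-b)² + 4ab))/2. -/
open Polynomial Matrix SimpleGraph

/-- The transmission of a vertex: the sum of its distances to all vertices. -/
noncomputable def transmission {V : Type*} [Fintype V] (G : SimpleGraph V) (v : V) : ℝ :=
  ∑ u : V, (G.dist v u : ℝ)

/-- The distance signless Laplacian matrix `D^Q(G) = Tr(G) + D(G)`. -/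
noncomputable def distSignlessLap {V : Type*} [Fintype V] [DecidableEq V]
    (G : SimpleGraph V) : Matrix V V ℝ :=
  Matrix.diagonal (transmission G) + Matrix.of fun u v => (G.dist u v : ℝ)

namespace Stmt13

variable {a b : ℕ}

lemma adj_lr (i : Fin a) (j : Fin b) :
    (completeBipartiteGraph (Fin a) (Fin b)).Adj (.inl i) (.inr j) := by
  simp [completeBipartiteGraph]

lemma dist_lr (i : Fin a) (j : Fin b) :
    (completeBipartiteGraph (Fin a) (Fin b)).dist (.inl i) (.inr j) = 1 :=
  SimpleGraph.dist_eq_one_iff_adj.mpr (adj_lr i j)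

lemma dist_rl (j : Fin b) (i : Fin a) :
    (completeBipartiteGraph (Fin a) (Fin b)).dist (.inr j) (.inl i) = 1 := by
  rw [SimpleGraph.dist_comm]; exact dist_lr i j

lemma dist_ll (hb : 1 ≤ b) {i j : Fin a} (h : i ≠ j) :
    (completeBipartiteGraph (Fin a) (Fin b)).dist (.inl i) (.inl j) = 2 := by
  set G := completeBipartiteGraph (Fin a) (Fin b)
  have w : G.Walk (.inl i) (.inl j) :=
    .cons (adj_lr i ⟨0, hb⟩) (.cons (G.adj_symm (adj_lr j ⟨0, hb⟩)) .nil)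
  have h2 : G.dist (.inl i) (.inl j) ≤ 2 := by
    simpa using SimpleGraph.dist_le
      (SimpleGraph.Walk.cons (adj_lr i ⟨0, hb⟩) (.cons (G.adj_symm (adj_lr j ⟨0, hb⟩)) .nil))
  have h0 : G.dist (.inl i) (.inl j) ≠ 0 :=
    (SimpleGraph.Reachable.pos_dist_of_ne ⟨w⟩ (by simpa using h)).ne'
  have h1 : G.dist (.inl i) (.inl j) ≠ 1 := by
    rw [ne_eq, SimpleGraph.dist_eq_one_iff_adj]
    simp [G, completeBipartiteGraph]
  omega

lemma dist_rr (ha : 1 ≤ a) {i j : Fin b} (h : i ≠ j) :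
    (completeBipartiteGraph (Fin a) (Fin b)).dist (.inr i) (.inr j) = 2 := by
  set G := completeBipartiteGraph (Fin a) (Fin b)
  have w : G.Walk (.inr i) (.inr j) :=
    .cons (G.adj_symm (adj_lr ⟨0, ha⟩ i)) (.cons (adj_lr ⟨0, ha⟩ j) .nil)
  have h2 : G.dist (.inr i) (.inr j) ≤ 2 := by
    simpa using SimpleGraph.dist_le
      (SimpleGraph.Walk.cons (G.adj_symm (adj_lr ⟨0, ha⟩ i)) (.cons (adj_lr ⟨0, ha⟩ j) .nil))
  have h0 : G.dist (.inr i) (.inr j) ≠ 0 :=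
    (SimpleGraph.Reachable.pos_dist_of_ne ⟨w⟩ (by simpa using h)).ne'
  have h1 : G.dist (.inr i) (.inr j) ≠ 1 := by
    rw [ne_eq, SimpleGraph.dist_eq_one_iff_adj]
    simp [G, completeBipartiteGraph]
  omega

lemma trans_l (hb : 1 ≤ b) (i : Fin a) :
    transmission (completeBipartiteGraph (Fin a) (Fin b)) (.inl i) = 2 * a - 2 + b := by
  rw [transmission, Fintype.sum_sum_type]
  have h1 : ∀ j : Fin a,
      ((completeBipartiteGraph (Fin a) (Fin b)).dist (.inl i) (.inl j) : ℝ) =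
        2 - (if j = i then 2 else 0) := by
    intro j
    by_cases h : j = i
    · subst h; simp [SimpleGraph.dist_self]
    · rw [dist_ll hb (Ne.symm h)]; simp [h]
  simp only [h1, dist_lr, Nat.cast_one]
  rw [Finset.sum_sub_distrib, Finset.sum_const, Finset.sum_ite_eq' Finset.univ i fun _ => (2 : ℝ)]
  simp [mul_comm]

lemma trans_r (ha : 1 ≤ a) (j : Fin b) :
    transmission (completeBipartiteGraph (Fin a) (Fin b)) (.inr j) = 2 * b - 2 + a := by
  rw [transmission, Fintype.sum_sum_type]
  have h1 : ∀ i : Fin b,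
      ((completeBipartiteGraph (Fin a) (Fin b)).dist (.inr j) (.inr i) : ℝ) =
        2 - (if i = j then 2 else 0) := by
    intro i
    by_cases h : i = j
    · subst h; simp [SimpleGraph.dist_self]
    · rw [dist_rr ha (Ne.symm h)]; simp [h]
  simp only [h1, dist_rl, Nat.cast_one]
  rw [Finset.sum_sub_distrib, Finset.sum_const, Finset.sum_ite_eq' Finset.univ j fun _ => (2 : ℝ)]
  simp [mul_comm]
  ring

end Stmt13

section Main

open Stmt13

variable {a b : ℕ}

lemma M_ll_eq (hb : 1 ≤ b) (i : Fin a) :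
    distSignlessLap (completeBipartiteGraph (Fin a) (Fin b)) (.inl i) (.inl i) =
      2 * a + b - 2 := by
  simp [distSignlessLap, trans_l hb, SimpleGraph.dist_self]
  ring

lemma M_ll_ne (hb : 1 ≤ b) {i j : Fin a} (h : i ≠ j) :
    distSignlessLap (completeBipartiteGraph (Fin a) (Fin b)) (.inl i) (.inl j) = 2 := by
  rw [distSignlessLap, Matrix.add_apply, Matrix.diagonal_apply_ne _ (by simpa using h)]
  simp [dist_ll hb h]

lemma M_lr (i : Fin a) (j : Fin b) :
    distSignlessLap (completeBipartiteGraph (Fin a) (Fin b)) (.inl i) (.inr j) = 1 := by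
  rw [distSignlessLap, Matrix.add_apply, Matrix.diagonal_apply_ne _ (by simp)]
  simp [dist_lr]

lemma M_rl (j : Fin b) (i : Fin a) :
    distSignlessLap (completeBipartiteGraph (Fin a) (Fin b)) (.inr j) (.inl i) = 1 := by
  rw [distSignlessLap, Matrix.add_apply, Matrix.diagonal_apply_ne _ (by simp)]
  simp [dist_rl]

lemma M_rr_eq (ha : 1 ≤ a) (j : Fin b) :
    distSignlessLap (completeBipartiteGraph (Fin a) (Fin b)) (.inr j) (.inr j) =
      2 * b + a - 2 := by
  simp [distSignlessLap, trans_r ha, SimpleGraph.dist_self]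
  ring

lemma M_rr_ne (ha : 1 ≤ a) {i j : Fin b} (h : i ≠ j) :
    distSignlessLap (completeBipartiteGraph (Fin a) (Fin b)) (.inr i) (.inr j) = 2 := by
  rw [distSignlessLap, Matrix.add_apply, Matrix.diagonal_apply_ne _ (by simpa using h)]
  simp [dist_rr ha h]

end Main

local notation "K" => RatFunc ℝ

set_option maxHeartbeats 1600000 in
/-- The distance signless Laplacian spectrum of `K_{a,b}` (`a, b ≥ 1`, `a + b ≥ 3`)
consists of `2a + b - 4` with multiplicity `a - 1`, `2b + a - 4` with multiplicity
`b - 1`, and the two eigenvalues `(5(a+b) - 8 ± √(9(a-b)² + 4ab))/2`, expressed via the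
characteristic polynomial. -/
theorem stmt_13 (a b : ℕ) (ha : 1 ≤ a) (hb : 1 ≤ b) (hab : 3 ≤ a + b) :
    (distSignlessLap (completeBipartiteGraph (Fin a) (Fin b))).charpoly =
      (Polynomial.X - Polynomial.C (2 * (a : ℝ) + (b : ℝ) - 4)) ^ (a - 1) *
        (Polynomial.X - Polynomial.C (2 * (b : ℝ) + (a : ℝ) - 4)) ^ (b - 1) *
        (Polynomial.X - Polynomial.C
          ((5 * ((a : ℝ) + (b : ℝ)) - 8 +
            Real.sqrt (9 * ((a : ℝ) - (b : ℝ)) ^ 2 + 4 * (a : ℝ) * (b : ℝ))) / 2)) *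
        (Polynomial.X - Polynomial.C
          ((5 * ((a : ℝ) + (b : ℝ)) - 8 -
            Real.sqrt (9 * ((a : ℝ) - (b : ℝ)) ^ 2 + 4 * (a : ℝ) * (b : ℝ))) / 2)) := by
  classical
  set f : ℝ[X] →+* K := (algebraMap ℝ[X] K : ℝ[X] →+* K) with hfdef
  have hinj : Function.Injective f := RatFunc.algebraMap_injective ℝ
  apply hinj
  set g : ℝ →+* K := f.comp (Polynomial.C : ℝ →+* ℝ[X]) with hgdef
  have hgC : ∀ r : ℝ, f (Polynomial.C r) = g r := fun _ => rfl
  set x : K := f Polynomial.X with hxdef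
  set cA : K := 2 * (a : K) + (b : K) - 4 with hcA
  set cB : K := 2 * (b : K) + (a : K) - 4 with hcB
  set rp : ℝ := (5 * ((a : ℝ) + (b : ℝ)) - 8 +
      Real.sqrt (9 * ((a : ℝ) - (b : ℝ)) ^ 2 + 4 * (a : ℝ) * (b : ℝ))) / 2 with hrp
  set rm : ℝ := (5 * ((a : ℝ) + (b : ℝ)) - 8 -
      Real.sqrt (9 * ((a : ℝ) - (b : ℝ)) ^ 2 + 4 * (a : ℝ) * (b : ℝ))) / 2 with hrm
  have hsumR : rp + rm = 5 * ((a : ℝ) + (b : ℝ)) - 8 := by rw [hrp, hrm]; ring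
  have hprodR : rp * rm =
      (4 * (a : ℝ) + (b : ℝ) - 4) * (4 * (b : ℝ) + (a : ℝ) - 4) - (a : ℝ) * (b : ℝ) := by
    rw [hrp, hrm]
    have h1 : Real.sqrt (9 * ((a : ℝ) - (b : ℝ)) ^ 2 + 4 * (a : ℝ) * (b : ℝ)) ^ 2
        = 9 * ((a : ℝ) - (b : ℝ)) ^ 2 + 4 * (a : ℝ) * (b : ℝ) :=
      Real.sq_sqrt (by positivity)
    linear_combination (-(1 : ℝ)/4) * h1
  set P : K := g rp with hP
  set Q : K := g rm with hQ
  have hsumK : P + Q = 5 * ((a : K) + (b : K)) - 8 := by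
    rw [hP, hQ, ← map_add, hsumR]
    simp only [map_sub, map_add, _root_.map_mul, map_ofNat, map_natCast]
  have hprodK : P * Q =
      (4 * (a : K) + (b : K) - 4) * (4 * (b : K) + (a : K) - 4) - (a : K) * (b : K) := by
    rw [hP, hQ, ← _root_.map_mul, hprodR]
    simp only [map_sub, map_add, _root_.map_mul, map_ofNat, map_natCast]
  have hne : ∀ r : ℝ, x - g r ≠ 0 := by
    intro r h
    have h2 : f (Polynomial.X - Polynomial.C r) = f 0 := by
      rw [map_sub, map_zero, hgC]; exact h
    exact Polynomial.X_sub_C_ne_zero r (hinj h2)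
  have hA : x - cA ≠ 0 := by
    have e : g (2 * (a : ℝ) + (b : ℝ) - 4) = cA := by
      simp only [map_sub, map_add, _root_.map_mul, map_ofNat, map_natCast]
      rfl
    rw [← e]; exact hne _
  have hB : x - cB ≠ 0 := by
    have e : g (2 * (b : ℝ) + (a : ℝ) - 4) = cB := by
      simp only [map_sub, map_add, _root_.map_mul, map_ofNat, map_natCast]
      rfl
    rw [← e]; exact hne _
  set d : Fin a ⊕ Fin b → K := Sum.elim (fun _ => x - cA) (fun _ => x - cB) with hddef
  have hd : ∀ v, d v ≠ 0 := by rintro (i | i); exacts [hA, hB]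
  set D : Matrix (Fin a ⊕ Fin b) (Fin a ⊕ Fin b) K := Matrix.diagonal d with hDdef
  set U : Matrix (Fin a ⊕ Fin b) (Fin 2) K :=
    Matrix.of (Sum.elim (fun _ => ![1, 0]) (fun _ => ![0, 1])) with hUdef
  set W : Matrix (Fin 2) (Fin a ⊕ Fin b) K :=
    Matrix.of ![Sum.elim (fun _ => (2 : K)) (fun _ => 1),
      Sum.elim (fun _ => (1 : K)) (fun _ => 2)] with hWdef
  have hUW : ∀ u v, (U * W) u v = U u 0 * W 0 v + U u 1 * W 1 v := by
    intro u v; rw [Matrix.mul_apply, Fin.sum_univ_two]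
  have hM : (charmatrix (distSignlessLap (completeBipartiteGraph (Fin a) (Fin b)))).map f
      = D - U * W := by
    ext u v
    rw [Matrix.map_apply, Matrix.sub_apply]
    rcases u with i | i <;> rcases v with j | j
    · by_cases h : i = j
      · subst h
        rw [charmatrix_apply_eq, M_ll_eq hb, map_sub, hgC, hUW]
        simp only [hDdef, hUdef, hWdef, hddef, Matrix.diagonal_apply_eq, Matrix.of_apply,
          Sum.elim_inl, Matrix.cons_val_zero, Matrix.cons_val_one, Matrix.head_cons,
          map_sub, map_add, _root_.map_mul, map_ofNat, map_natCast]
        push_cast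
        ring
      · rw [charmatrix_apply_ne _ _ _ (by simpa using h), M_ll_ne hb h, hUW]
        rw [hDdef, Matrix.diagonal_apply_ne _ (by simpa using h)]
        simp only [hUdef, hWdef, Matrix.of_apply, Sum.elim_inl, Matrix.cons_val_zero,
          Matrix.cons_val_one, Matrix.head_cons, map_neg, map_ofNat]
        ring
    · rw [charmatrix_apply_ne _ _ _ (by simp), M_lr, hUW]
      rw [hDdef, Matrix.diagonal_apply_ne _ (by simp)]
      simp only [hUdef, hWdef, Matrix.of_apply, Sum.elim_inl, Sum.elim_inr,
        Matrix.cons_val_zero, Matrix.cons_val_one, Matrix.head_cons, map_neg, _root_.map_one]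
      ring
    · rw [charmatrix_apply_ne _ _ _ (by simp), M_rl, hUW]
      rw [hDdef, Matrix.diagonal_apply_ne _ (by simp)]
      simp only [hUdef, hWdef, Matrix.of_apply, Sum.elim_inl, Sum.elim_inr,
        Matrix.cons_val_zero, Matrix.cons_val_one, Matrix.head_cons, map_neg, _root_.map_one]
      ring
    · by_cases h : i = j
      · subst h
        rw [charmatrix_apply_eq, M_rr_eq ha, map_sub, hgC, hUW]
        simp only [hDdef, hUdef, hWdef, hddef, Matrix.diagonal_apply_eq, Matrix.of_apply,
          Sum.elim_inr, Matrix.cons_val_zero, Matrix.cons_val_one, Matrix.head_cons,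
          map_sub, map_add, _root_.map_mul, map_ofNat, map_natCast]
        push_cast
        ring
      · rw [charmatrix_apply_ne _ _ _ (by simpa using h), M_rr_ne ha h, hUW]
        rw [hDdef, Matrix.diagonal_apply_ne _ (by simpa using h)]
        simp only [hUdef, hWdef, Matrix.of_apply, Sum.elim_inr, Matrix.cons_val_zero,
          Matrix.cons_val_one, Matrix.head_cons, map_neg, map_ofNat]
        ring
  rw [Matrix.charpoly, RingHom.map_det, RingHom.mapMatrix_apply, hM]
  set Dinv : Matrix (Fin a ⊕ Fin b) (Fin a ⊕ Fin b) K :=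
    Matrix.diagonal fun v => (d v)⁻¹ with hDinv
  have hDDinv : D * Dinv = 1 := by
    rw [hDdef, hDinv, Matrix.diagonal_mul_diagonal,
      show (fun v => d v * (d v)⁻¹) = fun _ => (1 : K) from
        funext fun v => mul_inv_cancel₀ (hd v), Matrix.diagonal_one]
  have hfac : D - U * W = D * (1 - Dinv * U * W) := by
    rw [Matrix.mul_sub, Matrix.mul_one]
    congr 1
    rw [← Matrix.mul_assoc, ← Matrix.mul_assoc, hDDinv, Matrix.one_mul]
  rw [hfac, Matrix.det_mul, Matrix.det_one_sub_mul_comm]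
  have hdetD : D.det = (x - cA) ^ a * (x - cB) ^ b := by
    rw [hDdef, Matrix.det_diagonal, Fintype.prod_sum_type]
    simp [hddef]
  have hDinvU : Dinv * U =
      Matrix.of (Sum.elim (fun _ => ![(x - cA)⁻¹, 0]) (fun _ => ![0, (x - cB)⁻¹])) := by
    ext v k
    rw [hDinv, Matrix.diagonal_mul]
    rcases v with i | i <;> fin_cases k <;> simp [hUdef, hddef]
  have hE : W * (Dinv * U) =
      Matrix.of ![![2 * a * (x - cA)⁻¹, b * (x - cB)⁻¹],
        ![(a : K) * (x - cA)⁻¹, 2 * b * (x - cB)⁻¹]] := by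
    rw [hDinvU]
    ext k l
    rw [Matrix.mul_apply, Fintype.sum_sum_type]
    fin_cases k <;> fin_cases l <;>
      simp [hWdef, Finset.sum_const, Finset.card_univ, mul_comm] <;> ring
  have hdet2 : (1 - W * (Dinv * U)).det =
      (1 - 2 * a * (x - cA)⁻¹) * (1 - 2 * b * (x - cB)⁻¹) -
        (b : K) * (x - cB)⁻¹ * ((a : K) * (x - cA)⁻¹) := by
    rw [hE, Matrix.det_fin_two]
    simp [Matrix.one_apply]
  have hRHS : f ((Polynomial.X - Polynomial.C (2 * (a : ℝ) + (b : ℝ) - 4)) ^ (a - 1) *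
        (Polynomial.X - Polynomial.C (2 * (b : ℝ) + (a : ℝ) - 4)) ^ (b - 1) *
        (Polynomial.X - Polynomial.C
          ((5 * ((a : ℝ) + (b : ℝ)) - 8 +
            Real.sqrt (9 * ((a : ℝ) - (b : ℝ)) ^ 2 + 4 * (a : ℝ) * (b : ℝ))) / 2)) *
        (Polynomial.X - Polynomial.C
          ((5 * ((a : ℝ) + (b : ℝ)) - 8 -
            Real.sqrt (9 * ((a : ℝ) - (b : ℝ)) ^ 2 + 4 * (a : ℝ) * (b : ℝ))) / 2))) =
      (x - cA) ^ (a - 1) * (x - cB) ^ (b - 1) * (x - P) * (x - Q) := by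
    simp only [_root_.map_mul, _root_.map_pow, map_sub, hgC, map_add,
      map_ofNat, map_natCast, ← hxdef, ← hP, ← hQ, hcA, hcB]
    rfl
  rw [hRHS, hdetD, hdet2]
  have hpowA : (x - cA) ^ a = (x - cA) ^ (a - 1) * (x - cA) := by
    rw [← pow_succ, Nat.sub_add_cancel ha]
  have hpowB : (x - cB) ^ b = (x - cB) ^ (b - 1) * (x - cB) := by
    rw [← pow_succ, Nat.sub_add_cancel hb]
  rw [hpowA, hpowB]
  have key : (x - cA) * (x - cB) *
      ((1 - 2 * a * (x - cA)⁻¹) * (1 - 2 * b * (x - cB)⁻¹) -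
        (b : K) * (x - cB)⁻¹ * ((a : K) * (x - cA)⁻¹)) =
      (x - P) * (x - Q) := by
    have expand : (x - cA) * (x - cB) *
        ((1 - 2 * a * (x - cA)⁻¹) * (1 - 2 * b * (x - cB)⁻¹) -
          (b : K) * (x - cB)⁻¹ * ((a : K) * (x - cA)⁻¹)) =
        ((x - cA) - 2 * a) * ((x - cB) - 2 * b) - (a : K) * b := by
      field_simp
    rw [expand, hcA, hcB]
    linear_combination x * hsumK - hprodK
  calc (x - cA) ^ (a - 1) * (x - cA) * ((x - cB) ^ (b - 1) * (x - cB)) *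
        ((1 - 2 * a * (x - cA)⁻¹) * (1 - 2 * b * (x - cB)⁻¹) -
          (b : K) * (x - cB)⁻¹ * ((a : K) * (x - cA)⁻¹))
      = (x - cA) ^ (a - 1) * (x - cB) ^ (b - 1) *
          ((x - cA) * (x - cB) *
            ((1 - 2 * a * (x - cA)⁻¹) * (1 - 2 * b * (x - cB)⁻¹) -
              (b : K) * (x - cB)⁻¹ * ((a : K) * (x - cA)⁻¹))) := by ring
    _ = _ := by rw [key]; ring
end
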